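/- arXiv:1810.04100 — 5 statements merged into one kernel-verified Lean document; each statement's English description precedes it below -/
import Mathlib

section
/- Let ω : [0,∞) → [0,∞) be differentiable with ω' > 0 and ω'' < 0 on (0,∞), τ = ω(0) > 0, and suppose ω(a(w)) ≥ b(w) for all w and ω is concave. Define v(η) = sup{1/ω'(x) : ω(x)/ω'(x) − x ≤ η}. For ω = ω_{h,r,μ,τ} with τ ≠ 0, v(η) ≤ η/τ. -/
noncomputable def omegaHRMT (h r μ τ : ℝ) (x : ℝ) : ℝ :=
  if x ≤ r then τ + (2 / μ) * (x / r) ^ h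
  else τ + 2 / μ + (2 / μ) * h * (x / r - 1)

open Set

private lemma hasDerivAt_fpart (h r μ τ : ℝ) (hr : 0 < r) {x : ℝ} (hx : 0 < x) :
    HasDerivAt (fun x => τ + 2 / μ * (x / r) ^ h)
      (2 / μ * (h * (x / r) ^ (h - 1) * (1 / r))) x := by
  have h1 : HasDerivAt (fun x : ℝ => x / r) (1 / r) x := (hasDerivAt_id x).div_const r
  have h2 : HasDerivAt (fun y : ℝ => y ^ h) (h * (x / r) ^ (h - 1)) (x / r) :=
    Real.hasDerivAt_rpow_const (Or.inl (ne_of_gt (div_pos hx hr)))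
  exact ((h2.comp x h1).const_mul (2 / μ)).const_add τ

private lemma hasDerivAt_gpart (h r μ τ : ℝ) (x : ℝ) :
    HasDerivAt (fun x => τ + 2 / μ + 2 / μ * h * (x / r - 1)) (2 / μ * h * (1 / r)) x := by
  have h1 : HasDerivAt (fun x : ℝ => x / r - 1) (1 / r) x :=
    ((hasDerivAt_id x).div_const r).sub_const 1
  exact (h1.const_mul (2 / μ * h)).const_add (τ + 2 / μ)

private lemma hasDerivAt_omega (h r μ τ : ℝ) (hr : 0 < r) {x : ℝ} (hx : 0 < x) :
    HasDerivAt (omegaHRMT h r μ τ)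
      (if x ≤ r then 2 / μ * (h * (x / r) ^ (h - 1) * (1 / r)) else 2 / μ * h * (1 / r)) x := by
  rcases lt_trichotomy x r with hxr | hxr | hxr
  · rw [if_pos hxr.le]
    refine (hasDerivAt_fpart h r μ τ hr hx).congr_of_eventuallyEq ?_
    filter_upwards [Iio_mem_nhds hxr] with y hy
    simp only [omegaHRMT, if_pos (mem_Iio.mp hy).le]
  · subst hxr
    have hval : 2 / μ * (h * (x / x) ^ (h - 1) * (1 / x)) = 2 / μ * h * (1 / x) := by
      rw [div_self (ne_of_gt hx), Real.one_rpow]; ring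
    rw [if_pos le_rfl, hval]
    have hΩf : ∀ y ∈ Iic x, omegaHRMT h x μ τ y = τ + 2 / μ * (y / x) ^ h := by
      intro y hy; simp only [omegaHRMT, if_pos (mem_Iic.mp hy)]
    have hΩg : ∀ y ∈ Ici x, omegaHRMT h x μ τ y = τ + 2 / μ + 2 / μ * h * (y / x - 1) := by
      intro y hy
      rcases eq_or_lt_of_le (mem_Ici.mp hy) with rfl | hy'
      · simp [omegaHRMT, div_self (ne_of_gt hx), Real.one_rpow]
      · simp only [omegaHRMT, if_neg (not_le.mpr hy')]
    have h1 : HasDerivWithinAt (omegaHRMT h x μ τ) (2 / μ * h * (1 / x)) (Iic x) x := by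
      have := (hasDerivAt_fpart h x μ τ hx hx).hasDerivWithinAt (s := Iic x)
      rw [hval] at this
      exact this.congr hΩf (hΩf x (mem_Iic.mpr le_rfl))
    have h2 : HasDerivWithinAt (omegaHRMT h x μ τ) (2 / μ * h * (1 / x)) (Ici x) x :=
      ((hasDerivAt_gpart h x μ τ x).hasDerivWithinAt (s := Ici x)).congr hΩg
        (hΩg x (mem_Ici.mpr le_rfl))
    have h3 := h1.union h2
    rw [Iic_union_Ici] at h3
    exact hasDerivWithinAt_univ.mp h3
  · rw [if_neg (not_le.mpr hxr)]
    refine (hasDerivAt_gpart h r μ τ x).congr_of_eventuallyEq ?_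
    filter_upwards [Ioi_mem_nhds hxr] with y hy
    simp only [omegaHRMT, if_neg (not_le.mpr (mem_Ioi.mp hy))]

/-- For `ω = ω_{h,r,μ,τ}` with `τ > 0`, the quantity
`v(η) = sup{1/ω'(x) : x > 0, ω(x)/ω'(x) − x ≤ η}` satisfies `v(η) ≤ η/τ`. -/
theorem stmt11 (h r μ τ : ℝ) (hh0 : 0 < h) (hh1 : h ≤ 1) (hr : 0 < r) (hμ : 0 < μ)
    (hτ : 0 < τ) (η : ℝ) (hη : 0 ≤ η) :
    sSup {y : ℝ | ∃ x : ℝ, 0 < x ∧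
        omegaHRMT h r μ τ x / deriv (omegaHRMT h r μ τ) x - x ≤ η ∧
        y = 1 / deriv (omegaHRMT h r μ τ) x}
      ≤ η / τ := by
  apply Real.sSup_le _ (div_nonneg hη hτ.le)
  rintro y ⟨x, hx, hcond, rfl⟩
  have hc : (0:ℝ) < 2 / μ := by positivity
  have hD := hasDerivAt_omega h r μ τ hr hx
  have hderiv := hD.deriv
  by_cases hxr : x ≤ r
  · rw [if_pos hxr] at hderiv
    set W := deriv (omegaHRMT h r μ τ) x with hW
    have hq : (0:ℝ) < (x / r) ^ (h - 1) := Real.rpow_pos_of_pos (div_pos hx hr) _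
    have hp : (0:ℝ) < (x / r) ^ h := Real.rpow_pos_of_pos (div_pos hx hr) _
    have hWpos : 0 < W := by rw [hderiv]; positivity
    have hmul : (x / r) ^ (h - 1) * (x / r) = (x / r) ^ h := by
      have := Real.rpow_add_one (ne_of_gt (div_pos hx hr)) (h - 1)
      rw [show h - 1 + 1 = h by ring] at this
      exact this.symm
    have hxW : x * W = 2 / μ * h * (x / r) ^ h := by
      rw [hderiv, ← hmul]; ring
    have hA : omegaHRMT h r μ τ x = τ + 2 / μ * (x / r) ^ h := by
      simp only [omegaHRMT, if_pos hxr]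
    have h1 : omegaHRMT h r μ τ x ≤ (η + x) * W := by
      rw [← div_le_iff₀ hWpos]; linarith
    have hτη : τ ≤ η * W := by
      rw [hA] at h1
      nlinarith [mul_nonneg (mul_nonneg hc.le hp.le) (sub_nonneg.mpr hh1)]
    rw [div_le_div_iff₀ hWpos hτ]
    linarith
  · rw [if_neg hxr] at hderiv
    push_neg at hxr
    set W := deriv (omegaHRMT h r μ τ) x with hW
    have hWpos : 0 < W := by rw [hderiv]; positivity
    have hxW : x * W = 2 / μ * h * (x / r) := by rw [hderiv]; field_simp
    have hA : omegaHRMT h r μ τ x = τ + 2 / μ + 2 / μ * h * (x / r - 1) := by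
      simp only [omegaHRMT, if_neg (not_le.mpr hxr)]
    have h1 : omegaHRMT h r μ τ x ≤ (η + x) * W := by
      rw [← div_le_iff₀ hWpos]; linarith
    have hτη : τ ≤ η * W := by
      rw [hA] at h1
      nlinarith
    rw [div_le_div_iff₀ hWpos hτ]
    linarith
end

section
/- For all real v: 2√Σ ≥ v² + (1/36)v⁴, where Σ = 2 − v² − (e^v + e^{−v}) + v(e^v − e^{−v}); equivalently 4Σ ≥ (v² + v⁴/36)². -/
private lemma mono_aux (f f' : ℝ → ℝ) (hf : ∀ x, HasDerivAt f (f' x) x)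
    (h0 : f 0 = 0) (hd : ∀ x, 0 ≤ x → 0 ≤ f' x) {x : ℝ} (hx : 0 ≤ x) : 0 ≤ f x := by
  have hmono : MonotoneOn f (Set.Ici 0) := by
    apply monotoneOn_of_deriv_nonneg (convex_Ici 0)
    · exact fun y _ => ((hf y).differentiableAt).continuousAt.continuousWithinAt
    · exact fun y _ => ((hf y).differentiableAt).differentiableWithinAt
    · intro y hy
      rw [(hf y).deriv]
      exact hd y (le_of_lt (by simpa using hy))
  calc (0:ℝ) = f 0 := h0.symm
    _ ≤ f x := hmono Set.self_mem_Ici hx hx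

private lemma hend (x : ℝ) : HasDerivAt (fun t : ℝ => Real.exp (-t)) (-Real.exp (-x)) x := by
  have := (Real.hasDerivAt_exp (-x)).comp x ((hasDerivAt_id x).neg)
  simpa [Function.comp_def] using this

private lemma hpe (a0 a1 a2 a3 a4 a5 a6 a7 s : ℝ) (x : ℝ) :
    HasDerivAt (fun t : ℝ => a0 + a1*t + a2*t^2 + a3*t^3 + a4*t^4 + a5*t^5 + a6*t^6 + a7*t^7
        + s * Real.exp (-t))
      (a1 + 2*a2*x + 3*a3*x^2 + 4*a4*x^3 + 5*a5*x^4 + 6*a6*x^5 + 7*a7*x^6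
        - s * Real.exp (-x)) x := by
  have h2 := hasDerivAt_pow 2 x; have h3 := hasDerivAt_pow 3 x
  have h4 := hasDerivAt_pow 4 x; have h5 := hasDerivAt_pow 5 x
  have h6 := hasDerivAt_pow 6 x; have h7 := hasDerivAt_pow 7 x
  have := (((((((((hasDerivAt_const x a0).add ((hasDerivAt_id x).const_mul a1)).add
    (h2.const_mul a2)).add (h3.const_mul a3)).add (h4.const_mul a4)).add
    (h5.const_mul a5)).add (h6.const_mul a6)).add (h7.const_mul a7)).add
    ((hend x).const_mul s))
  refine HasDerivAt.congr_deriv this ?_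
  push_cast; ring

private lemma step (a0 a1 a2 a3 a4 a5 a6 a7 s : ℝ) (h0 : a0 + s = 0)
    (hd : ∀ t : ℝ, 0 ≤ t →
      0 ≤ a1 + 2*a2*t + 3*a3*t^2 + 4*a4*t^3 + 5*a5*t^4 + 6*a6*t^5 + 7*a7*t^6
        - s * Real.exp (-t)) :
    ∀ x : ℝ, 0 ≤ x →
      0 ≤ a0 + a1*x + a2*x^2 + a3*x^3 + a4*x^4 + a5*x^5 + a6*x^6 + a7*x^7
        + s * Real.exp (-x) := by
  intro x hx
  exact mono_aux _ _ (fun t => hpe a0 a1 a2 a3 a4 a5 a6 a7 s t)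
    (by simp [Real.exp_zero]; linarith) hd hx

private lemma E2 : ∀ x : ℝ, 0 ≤ x → Real.exp (-x) ≤ 1 - x + x^2/2 := by
  have h := step 1 (-1) (1/2) 0 0 0 0 0 (-1) (by norm_num)
    (fun t ht => by have := Real.add_one_le_exp (-t); nlinarith)
  intro x hx; have := h x hx; nlinarith

private lemma E3 : ∀ x : ℝ, 0 ≤ x → 1 - x + x^2/2 - x^3/6 ≤ Real.exp (-x) := by
  have h := step (-1) 1 (-1/2) (1/6) 0 0 0 0 1 (by norm_num)
    (fun t ht => by have := E2 t ht; nlinarith)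
  intro x hx; have := h x hx; nlinarith

private lemma E4 : ∀ x : ℝ, 0 ≤ x → Real.exp (-x) ≤ 1 - x + x^2/2 - x^3/6 + x^4/24 := by
  have h := step 1 (-1) (1/2) (-1/6) (1/24) 0 0 0 (-1) (by norm_num)
    (fun t ht => by have := E3 t ht; nlinarith)
  intro x hx; have := h x hx; nlinarith

private lemma E5 : ∀ x : ℝ, 0 ≤ x →
    1 - x + x^2/2 - x^3/6 + x^4/24 - x^5/120 ≤ Real.exp (-x) := by
  have h := step (-1) 1 (-1/2) (1/6) (-1/24) (1/120) 0 0 1 (by norm_num)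
    (fun t ht => by have := E4 t ht; nlinarith)
  intro x hx; have := h x hx; nlinarith

private lemma E6 : ∀ x : ℝ, 0 ≤ x →
    Real.exp (-x) ≤ 1 - x + x^2/2 - x^3/6 + x^4/24 - x^5/120 + x^6/720 := by
  have h := step 1 (-1) (1/2) (-1/6) (1/24) (-1/120) (1/720) 0 (-1) (by norm_num)
    (fun t ht => by have := E5 t ht; nlinarith)
  intro x hx; have := h x hx; nlinarith

private lemma E7 : ∀ x : ℝ, 0 ≤ x →
    1 - x + x^2/2 - x^3/6 + x^4/24 - x^5/120 + x^6/720 - x^7/5040 ≤ Real.exp (-x) := by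
  have h := step (-1) 1 (-1/2) (1/6) (-1/24) (1/120) (-1/720) (1/5040) 1 (by norm_num)
    (fun t ht => by have := E6 t ht; nlinarith)
  intro x hx; have := h x hx; nlinarith

private lemma expLB (x : ℝ) (hx : 0 ≤ x) :
    1 + x + x^2/2 + x^3/6 + x^4/24 + x^5/120 + x^6/720 + x^7/5040 ≤ Real.exp x := by
  have h := Real.sum_le_exp_of_nonneg hx 8
  norm_num [Finset.sum_range_succ, Nat.factorial] at h
  linarith

/-- `Σ(v) ≥ v⁴/4 + v⁶/72 + v⁸/2880` for `v ≥ 0`. -/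
private lemma sigmaLB (v : ℝ) (hv : 0 ≤ v) :
    v^4/4 + v^6/72 + v^8/2880
      ≤ 2 - v^2 - (Real.exp v + Real.exp (-v)) + v * (Real.exp v - Real.exp (-v)) := by
  have key : 0 ≤ 2 - v^2 - (Real.exp v + Real.exp (-v)) + v * (Real.exp v - Real.exp (-v))
      - (v^4/4 + v^6/72 + v^8/2880) := by
    apply mono_aux
      (fun t => 2 - t^2 - (Real.exp t + Real.exp (-t)) + t * (Real.exp t - Real.exp (-t))
        - (t^4/4 + t^6/72 + t^8/2880))
      (fun t => -2*t + t * Real.exp t + t * Real.exp (-t) - (t^3 + t^5/12 + t^7/360))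
    · intro t
      have he := Real.hasDerivAt_exp t
      have hne := hend t
      have h2 := hasDerivAt_pow 2 t; have h4 := hasDerivAt_pow 4 t
      have h6 := hasDerivAt_pow 6 t; have h8 := hasDerivAt_pow 8 t
      have hprod : HasDerivAt (fun s : ℝ => s * (Real.exp s - Real.exp (-s)))
          (1 * (Real.exp t - Real.exp (-t)) + t * (Real.exp t - (-Real.exp (-t)))) t :=
        (hasDerivAt_id t).mul (he.sub hne)
      have := ((((hasDerivAt_const t (2:ℝ)).sub h2).sub (he.add hne)).add hprod).sub
        (((h4.div_const 4).add (h6.div_const 72)).add (h8.div_const 2880))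
      refine HasDerivAt.congr_deriv this ?_
      push_cast; ring
    · norm_num
    · intro t ht
      have h1 := expLB t ht
      have h2 := E7 t ht
      nlinarith [mul_le_mul_of_nonneg_left (by linarith :
        t^2 + t^4/12 + t^6/360 ≤ Real.exp t + Real.exp (-t) - 2) ht]
    · exact hv
  linarith

private lemma part1 (v : ℝ) :
    (v ^ 2 + v ^ 4 / 36) ^ 2
      ≤ 4 * (2 - v ^ 2 - (Real.exp v + Real.exp (-v)) + v * (Real.exp v - Real.exp (-v))) := by
  rcases le_or_gt 0 v with hv | hv
  · have := sigmaLB v hv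
    nlinarith [sq_nonneg (v^2*v^2)]
  · have h := sigmaLB (-v) (by linarith)
    simp only [neg_neg] at h
    nlinarith [sq_nonneg (v^2*v^2)]

/-- With `Σ = 2 − v² − (e^v + e^{−v}) + v(e^v − e^{−v})`:
`4Σ ≥ (v² + v⁴/36)²` and `2√Σ ≥ v² + (1/36)v⁴`. -/
theorem stmt14 (v : ℝ) :
    ((v ^ 2 + v ^ 4 / 36) ^ 2
        ≤ 4 * (2 - v ^ 2 - (Real.exp v + Real.exp (-v)) + v * (Real.exp v - Real.exp (-v)))) ∧
    (v ^ 2 + (1 / 36) * v ^ 4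
        ≤ 2 * Real.sqrt
            (2 - v ^ 2 - (Real.exp v + Real.exp (-v)) + v * (Real.exp v - Real.exp (-v)))) := by
  have h1 := part1 v
  refine ⟨h1, ?_⟩
  set S := 2 - v ^ 2 - (Real.exp v + Real.exp (-v)) + v * (Real.exp v - Real.exp (-v)) with hS
  have hS0 : 0 ≤ S := by nlinarith [sq_nonneg (v ^ 2 + v ^ 4 / 36)]
  have hx : (0:ℝ) ≤ (v ^ 2 + v ^ 4 / 36) / 2 := by positivity
  have : (v ^ 2 + v ^ 4 / 36) / 2 ≤ Real.sqrt S := by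
    rw [Real.le_sqrt hx]
    all_goals nlinarith
  linarith
end

section
/- Let g(u) = e^u + e^{−u} − 2 − u². Then for all u, u' ∈ ℝ: g(u) − g(u') − g'(u')(u − u') ≥ (1/36)(u − u')⁴. -/
/-!
Write `g = φ + u⁴/12`. Since `φ'' = g ≥ 0`, the function `φ` is convex, so its tangent-line gap
is nonnegative, and the tangent-line gap of `u⁴/12` at `u'` is
`(u - u')² (u² + 2uu' + 3u'²)/12 = (u - u')⁴/36 + (u - u')² (u + 2u')²/18`.
That `g ≥ 0` is itself a tangent-line bound: `g'' = e^u + e^{-u} - 2 ≥ 0` and `g(0) = g'(0) = 0`.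
-/

open Real Set

lemma ConvexOn.mul_sub_le_sub_of_hasDerivAt {S : Set ℝ} {f : ℝ → ℝ} {f' x y : ℝ}
    (hf : ConvexOn ℝ S f) (hx : x ∈ S) (hy : y ∈ S) (hd : HasDerivAt f f' x) :
    f' * (y - x) ≤ f y - f x := by
  rcases lt_trichotomy x y with hxy | rfl | hyx
  · have := hf.le_slope_of_hasDerivAt hx hy hxy hd
    rwa [slope_def_field, le_div_iff₀ (sub_pos.mpr hxy)] at this
  · simp
  · have := hf.slope_le_of_hasDerivAt hy hx hyx hd
    rw [slope_def_field, div_le_iff₀ (sub_pos.mpr hyx)] at this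
    linarith

lemma convexOn_univ_of_hasDerivAt2_nonneg {f f' f'' : ℝ → ℝ}
    (hf : ∀ x, HasDerivAt f (f' x) x) (hf' : ∀ x, HasDerivAt f' (f'' x) x)
    (hf'' : ∀ x, 0 ≤ f'' x) : ConvexOn ℝ univ f :=
  convexOn_of_hasDerivWithinAt2_nonneg convex_univ
    (fun x _ ↦ (hf x).continuousAt.continuousWithinAt)
    (fun x _ ↦ (hf x).hasDerivWithinAt) (fun x _ ↦ (hf' x).hasDerivWithinAt) (fun x _ ↦ hf'' x)

lemma hasDerivAt_exp_add_exp_neg (x : ℝ) :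
    HasDerivAt (fun u ↦ exp u + exp (-u)) (exp x - exp (-x)) x :=
  ((hasDerivAt_exp x).add (hasDerivAt_neg x).exp).congr_deriv (by ring)

lemma hasDerivAt_exp_sub_exp_neg (x : ℝ) :
    HasDerivAt (fun u ↦ exp u - exp (-u)) (exp x + exp (-x)) x :=
  ((hasDerivAt_exp x).sub (hasDerivAt_neg x).exp).congr_deriv (by ring)

lemma two_le_exp_add_exp_neg (x : ℝ) : 2 ≤ exp x + exp (-x) := by
  linarith [add_one_le_exp x, add_one_le_exp (-x)]

lemma hasDerivAt_exp_add_exp_neg_sub_two_sub_sq (x : ℝ) :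
    HasDerivAt (fun u ↦ exp u + exp (-u) - 2 - u ^ 2) (exp x - exp (-x) - 2 * x) x :=
  (((hasDerivAt_exp_add_exp_neg x).sub_const 2).sub (hasDerivAt_pow 2 x)).congr_deriv
    (by norm_num)

lemma hasDerivAt_exp_sub_exp_neg_sub_two_mul (x : ℝ) :
    HasDerivAt (fun u ↦ exp u - exp (-u) - 2 * u) (exp x + exp (-x) - 2) x :=
  ((hasDerivAt_exp_sub_exp_neg x).sub ((hasDerivAt_id x).const_mul 2)).congr_deriv (by simp)

lemma sq_le_exp_add_exp_neg_sub_two (x : ℝ) : x ^ 2 ≤ exp x + exp (-x) - 2 := by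
  have hconv : ConvexOn ℝ univ (fun u ↦ exp u + exp (-u) - 2 - u ^ 2) :=
    convexOn_univ_of_hasDerivAt2_nonneg hasDerivAt_exp_add_exp_neg_sub_two_sub_sq
      hasDerivAt_exp_sub_exp_neg_sub_two_mul (fun u ↦ by linarith [two_le_exp_add_exp_neg u])
  have htangent := hconv.mul_sub_le_sub_of_hasDerivAt (mem_univ 0) (mem_univ x)
    (hasDerivAt_exp_add_exp_neg_sub_two_sub_sq 0)
  norm_num at htangent
  linarith

lemma convexOn_exp_add_exp_neg_sub_two_sub_sq_sub_pow_four :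
    ConvexOn ℝ univ (fun u ↦ exp u + exp (-u) - 2 - u ^ 2 - u ^ 4 / 12) := by
  refine convexOn_univ_of_hasDerivAt2_nonneg (f' := fun u ↦ exp u - exp (-u) - 2 * u - u ^ 3 / 3)
    (fun x ↦ ?_) (fun x ↦ ?_) (fun x ↦ sub_nonneg.mpr (sq_le_exp_add_exp_neg_sub_two x))
  · exact ((hasDerivAt_exp_add_exp_neg_sub_two_sub_sq x).sub
      ((hasDerivAt_pow 4 x).div_const 12)).congr_deriv (by norm_num; ring)
  · exact ((hasDerivAt_exp_sub_exp_neg_sub_two_mul x).sub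
      ((hasDerivAt_pow 3 x).div_const 3)).congr_deriv (by norm_num)

lemma pow_four_tangent_gap (u u' : ℝ) :
    (u - u') ^ 4 / 36 ≤ u ^ 4 / 12 - u' ^ 4 / 12 - u' ^ 3 / 3 * (u - u') := by
  have key : u ^ 4 / 12 - u' ^ 4 / 12 - u' ^ 3 / 3 * (u - u') - (u - u') ^ 4 / 36
      = (u - u') ^ 2 * (u + 2 * u') ^ 2 / 18 := by ring
  linarith [key, show 0 ≤ (u - u') ^ 2 * (u + 2 * u') ^ 2 / 18 by positivity]

/-- For `g(u) = e^u + e^{−u} − 2 − u²`: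
`g(u) − g(u') − g'(u')(u − u') ≥ (1/36)(u − u')⁴` for all `u, u'`. -/
theorem stmt15 (g : ℝ → ℝ)
    (hg : g = fun u : ℝ => Real.exp u + Real.exp (-u) - 2 - u ^ 2) :
    ∀ u u' : ℝ,
      (1 / 36) * (u - u') ^ 4 ≤ g u - g u' - deriv g u' * (u - u') := by
  subst hg
  intro u u'
  rw [(hasDerivAt_exp_add_exp_neg_sub_two_sub_sq u').deriv]
  have hφ := convexOn_exp_add_exp_neg_sub_two_sub_sq_sub_pow_four.mul_sub_le_sub_of_hasDerivAt
    (mem_univ u') (mem_univ u) (((hasDerivAt_exp_add_exp_neg_sub_two_sub_sq u').sub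
      ((hasDerivAt_pow 4 u').div_const 12)))
  have hquartic := pow_four_tangent_gap u u'
  norm_num at hφ ⊢
  linarith
end

section
/- Let G(w) = Σ_{i=1}^d (e^{w_i} + e^{−w_i} − 2 − w_i²) for w ∈ ℝ^d. Then for all w, w' ∈ ℝ^d: G(w) − G(w') − ⟨∇G(w'), w − w'⟩ ≥ (1/(36d))·‖w − w'‖₂⁴. -/
/-!
Writing `g(u) = eᵘ + e⁻ᵘ - 2 - u² = 2 cosh u - 2 - u²`, we have `g''(u) = 2 cosh u - 2 ≥ u²`, so
`g - u⁴/12` is convex and the Bregman divergence of `g` dominates that of `u ↦ u⁴/12`, which is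
`(b - a)² (b² + 2ab + 3a²)/12 ≥ (b - a)⁴/36`. Summing over coordinates and using
`‖v‖⁴ = (∑ vᵢ²)² ≤ d ∑ vᵢ⁴` gives the bound.
-/

open Real

def bregman (f f' : ℝ → ℝ) (a b : ℝ) : ℝ := f b - f a - f' a * (b - a)

lemma bregman_nonneg {f f' : ℝ → ℝ} (hf : ∀ x, HasDerivAt f (f' x) x) (hf' : Monotone f')
    (a b : ℝ) : 0 ≤ bregman f f' a b := by
  have hcont : Continuous f := continuous_iff_continuousAt.2 fun x => (hf x).continuousAt
  unfold bregman
  rcases lt_trichotomy a b with hab | rfl | hba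
  · obtain ⟨c, hc, hslope⟩ :=
      exists_hasDerivAt_eq_slope f f' hab hcont.continuousOn fun x _ => hf x
    rw [eq_div_iff (sub_ne_zero.2 hab.ne')] at hslope
    nlinarith [hf' hc.1.le]
  · simp
  · obtain ⟨c, hc, hslope⟩ :=
      exists_hasDerivAt_eq_slope f f' hba hcont.continuousOn fun x _ => hf x
    rw [eq_div_iff (sub_ne_zero.2 hba.ne')] at hslope
    nlinarith [hf' hc.2.le]

lemma bregman_le_bregman_of_deriv2_le {f f' f'' h h' h'' : ℝ → ℝ}
    (hf : ∀ x, HasDerivAt f (f' x) x) (hf' : ∀ x, HasDerivAt f' (f'' x) x)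
    (hh : ∀ x, HasDerivAt h (h' x) x) (hh' : ∀ x, HasDerivAt h' (h'' x) x)
    (hle : ∀ x, h'' x ≤ f'' x) (a b : ℝ) :
    bregman h h' a b ≤ bregman f f' a b := by
  have hmono : Monotone fun x => f' x - h' x :=
    monotone_of_hasDerivAt_nonneg (fun x => (hf' x).fun_sub (hh' x))
      fun x => sub_nonneg.2 (hle x)
  have := bregman_nonneg (fun x => (hf x).fun_sub (hh x)) hmono a b
  unfold bregman at *
  linarith

lemma sq_le_two_mul_cosh_sub_two (u : ℝ) : u ^ 2 ≤ 2 * cosh u - 2 := by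
  have := bregman_le_bregman_of_deriv2_le (f'' := fun x => 2 * cosh x) (h'' := fun _ => 2)
    (fun x => (hasDerivAt_cosh x).const_mul 2) (fun x => (hasDerivAt_sinh x).const_mul 2)
    (fun x => by simpa using hasDerivAt_pow 2 x)
    (fun x => by simpa using (hasDerivAt_id' x).const_mul 2)
    (fun x => by linarith [one_le_cosh x]) 0 u
  simpa [bregman] using this

lemma sub_pow_four_div_le_bregman_cosh (a b : ℝ) :
    (b - a) ^ 4 / 36 ≤
      bregman (fun u => 2 * cosh u - 2 - u ^ 2) (fun u => 2 * sinh u - 2 * u) a b := by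
  have := bregman_le_bregman_of_deriv2_le (h := fun u => u ^ 4 / 12) (h' := fun u => u ^ 3 / 3)
    (f'' := fun x => 2 * cosh x - 2) (h'' := fun x => x ^ 2)
    (fun x => ((((hasDerivAt_cosh x).const_mul 2).sub_const 2).fun_sub
      (hasDerivAt_pow 2 x)).congr_deriv (by norm_num))
    (fun x => (((hasDerivAt_sinh x).const_mul 2).fun_sub
      ((hasDerivAt_id' x).const_mul 2)).congr_deriv (by norm_num))
    (fun x => ((hasDerivAt_pow 4 x).div_const 12).congr_deriv (by norm_num; ring))
    (fun x => ((hasDerivAt_pow 3 x).div_const 3).congr_deriv (by norm_num))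
    (fun x => by linarith [sq_le_two_mul_cosh_sub_two x]) a b
  unfold bregman at *
  -- `(b - a)² (b² + 2ab + 3a²)/12 - (b - a)⁴/36 = ((b - a)(b + 2a))²/18`
  nlinarith [sq_nonneg ((b - a) * (b + 2 * a))]

lemma EuclideanSpace.norm_pow_four_le {ι : Type*} [Fintype ι] (v : EuclideanSpace ℝ ι) :
    ‖v‖ ^ 4 ≤ Fintype.card ι * ∑ i, v i ^ 4 := by
  have hsq : ‖v‖ ^ 2 = ∑ i, v i ^ 2 := by simp [EuclideanSpace.norm_sq_eq]
  calc ‖v‖ ^ 4 = (∑ i, v i ^ 2) ^ 2 := by rw [← hsq]; ring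
    _ ≤ Fintype.card ι * ∑ i, (v i ^ 2) ^ 2 := by
        simpa using sq_sum_le_card_mul_sum_sq (s := Finset.univ) (f := fun i => v i ^ 2)
    _ = Fintype.card ι * ∑ i, v i ^ 4 := by simp only [← pow_mul]

/-- For `G(w) = Σᵢ (e^{wᵢ} + e^{−wᵢ} − 2 − wᵢ²)` on `ℝ^d`:
`G(w) − G(w') − ⟨∇G(w'), w − w'⟩ ≥ (1/(36d))·‖w − w'‖⁴`, where
`⟨∇G(w'), w − w'⟩ = Σᵢ (e^{w'ᵢ} − e^{−w'ᵢ} − 2w'ᵢ)(wᵢ − w'ᵢ)`. -/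
theorem stmt16 (d : ℕ) (G : EuclideanSpace ℝ (Fin d) → ℝ)
    (hG : G = fun w => ∑ i, (Real.exp (w i) + Real.exp (-(w i)) - 2 - (w i) ^ 2)) :
    ∀ w w' : EuclideanSpace ℝ (Fin d),
      (1 / (36 * d)) * ‖w - w'‖ ^ 4
        ≤ G w - G w' - ∑ i, (Real.exp (w' i) - Real.exp (-(w' i)) - 2 * w' i) * (w i - w' i) := by
  subst hG
  intro w w'
  have hnorm := EuclideanSpace.norm_pow_four_le (w - w')
  simp only [Fintype.card_fin, PiLp.sub_apply] at hnorm
  have hbregman : ∀ i, bregman (fun u => 2 * cosh u - 2 - u ^ 2) (fun u => 2 * sinh u - 2 * u)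
      (w' i) (w i) = (exp (w i) + exp (-(w i)) - 2 - w i ^ 2)
        - (exp (w' i) + exp (-(w' i)) - 2 - w' i ^ 2)
        - (exp (w' i) - exp (-(w' i)) - 2 * w' i) * (w i - w' i) := by
    intro i
    simp only [bregman, cosh_eq, sinh_eq]
    ring
  calc (1 / (36 * d)) * ‖w - w'‖ ^ 4
      ≤ (1 / (36 * d)) * (d * ∑ i, (w i - w' i) ^ 4) := by gcongr
    _ = (d / d) * ∑ i, (w i - w' i) ^ 4 / 36 := by rw [← Finset.sum_div]; ring
    _ ≤ ∑ i, (w i - w' i) ^ 4 / 36 :=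
        mul_le_of_le_one_left (by positivity) (div_self_le_one _)
    _ ≤ ∑ i, bregman (fun u => 2 * cosh u - 2 - u ^ 2) (fun u => 2 * sinh u - 2 * u)
          (w' i) (w i) :=
        Finset.sum_le_sum fun i _ => sub_pow_four_div_le_bregman_cosh _ _
    _ = _ := by simp only [hbregman, Finset.sum_sub_distrib]
end

section
/- Let (y_t) be a nonnegative sequence satisfying y_{t+1} ≤ (1 − n(t)v(n(t)))·y_t + (2N+1)·n(t)², where n : [0,∞) → (0,∞) is decreasing, v is increasing, and 0 ≤ n(t)v(n(t)) ≤ 1 for all t. Then y_{t+1} ≤ Σ_{i=0}^t exp(−(M(t+1) − M(i+1)))·(2N+1)n(i)² + y_0·exp(−M(t+1)), where M(y) = ∫_0^y n(x)v(n(x)) dx. -/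
/-- For a nonnegative sequence `y` satisfying the recurrence
`y_{t+1} ≤ (1 − n(t)v(n(t)))y_t + (2N+1)n(t)²` with `n` decreasing positive,
`v` increasing, and `0 ≤ n(t)v(n(t)) ≤ 1`:
`y_{t+1} ≤ Σ_{i=0}^t exp(−(M(t+1) − M(i+1)))(2N+1)n(i)² + y_0 exp(−M(t+1))`,
where `M(z) = ∫_0^z n(x)v(n(x)) dx`. -/
theorem stmt19 (y : ℕ → ℝ) (n v : ℝ → ℝ) (N : ℝ) (hN : 0 ≤ N)
    (hy : ∀ t : ℕ, 0 ≤ y t)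
    (hn : ∀ x : ℝ, 0 < n x) (hanti : Antitone n) (hv : Monotone v)
    (hnv : ∀ x : ℝ, 0 ≤ n x * v (n x) ∧ n x * v (n x) ≤ 1)
    (hrec : ∀ t : ℕ, y (t + 1) ≤ (1 - n t * v (n t)) * y t + (2 * N + 1) * n t ^ 2)
    (M : ℝ → ℝ) (hM : ∀ z : ℝ, M z = ∫ x in (0 : ℝ)..z, n x * v (n x)) :
    ∀ t : ℕ, y (t + 1) ≤
      (∑ i ∈ Finset.range (t + 1),
        Real.exp (-(M (t + 1) - M (i + 1))) * ((2 * N + 1) * n i ^ 2))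
      + y 0 * Real.exp (-(M (t + 1))) := by
  set f : ℝ → ℝ := fun x => n x * v (n x) with hfdef
  have hv0 : ∀ x : ℝ, 0 ≤ v (n x) := by
    intro x
    by_contra h
    push_neg at h
    nlinarith [(hnv x).1, hn x]
  have hf_anti : Antitone f := by
    intro a b hab
    simp only [hfdef]
    exact mul_le_mul (hanti hab) (hv (hanti hab)) (hv0 b) (hn a).le
  have hfint : ∀ a b : ℝ, IntervalIntegrable f MeasureTheory.volume a b :=
    fun a b => hf_anti.intervalIntegrable
  have hMadd : ∀ a : ℝ, M (a + 1) = M a + ∫ x in a..(a + 1), f x := by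
    intro a
    rw [hM, hM, intervalIntegral.integral_add_adjacent_intervals (hfint 0 a) (hfint a (a + 1))]
  have hdiff_le : ∀ a : ℝ, M (a + 1) - M a ≤ f a := by
    intro a
    rw [hMadd]
    have h1 : (∫ x in a..(a + 1), f x) ≤ ∫ x in a..(a + 1), f a := by
      apply intervalIntegral.integral_mono_on (by linarith) (hfint a (a + 1))
        intervalIntegrable_const
      intro x hx
      exact hf_anti hx.1
    simpa using h1
  have hdiff_nonneg : ∀ a : ℝ, 0 ≤ a → 0 ≤ M (a + 1) - M a := by
    intro a ha
    rw [hMadd]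
    have : 0 ≤ ∫ x in a..(a + 1), f x := by
      apply intervalIntegral.integral_nonneg (by linarith)
      intro x _
      exact (hnv x).1
    linarith
  have key : ∀ a : ℝ, 1 - f a ≤ Real.exp (-(M (a + 1) - M a)) := by
    intro a
    have h1 : 1 - f a ≤ Real.exp (-(f a)) := by
      linarith [Real.add_one_le_exp (-(f a))]
    exact h1.trans (Real.exp_le_exp.mpr (by linarith [hdiff_le a]))
  have hf1 : ∀ a : ℝ, f a ≤ 1 := fun a => (hnv a).2
  intro t
  induction t with
  | zero =>
      have h0 := hrec 0
      have hk := key 0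
      simp only [Nat.cast_zero, zero_add] at *
      have : (1 - f 0) * y 0 ≤ Real.exp (-(M 1 - M 0)) * y 0 :=
        mul_le_mul_of_nonneg_right hk (hy 0)
      have hM0 : M 0 = 0 := by rw [hM]; simp
      rw [hM0] at this
      simp only [Finset.sum_range_one, Nat.cast_zero, zero_add, sub_self, neg_zero,
        Real.exp_zero, one_mul, sub_zero] at *
      calc y 1 ≤ (1 - f 0) * y 0 + (2 * N + 1) * n 0 ^ 2 := h0
        _ ≤ Real.exp (-(M 1)) * y 0 + (2 * N + 1) * n 0 ^ 2 := by linarith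
        _ = (2 * N + 1) * n 0 ^ 2 + y 0 * Real.exp (-(M 1)) := by ring
  | succ t ih =>
      have h0 := hrec (t + 1)
      have hk := key ((t : ℝ) + 1)
      have hcast : ((t + 1 : ℕ) : ℝ) = (t : ℝ) + 1 := by push_cast; ring
      have hcast2 : (((t + 1 : ℕ) : ℝ) + 1) = (t : ℝ) + 1 + 1 := by push_cast; ring
      have hstep : y (t + 1 + 1) ≤ (1 - f ((t : ℝ) + 1)) * y (t + 1)
          + (2 * N + 1) * n ((t : ℝ) + 1) ^ 2 := by
        simpa [hcast] using h0
      have hpos : 0 ≤ 1 - f ((t : ℝ) + 1) := by linarith [hf1 ((t : ℝ) + 1)]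
      have h1 : (1 - f ((t : ℝ) + 1)) * y (t + 1) ≤ (1 - f ((t : ℝ) + 1)) *
          ((∑ i ∈ Finset.range (t + 1),
            Real.exp (-(M (t + 1) - M (i + 1))) * ((2 * N + 1) * n i ^ 2))
          + y 0 * Real.exp (-(M (t + 1)))) :=
        mul_le_mul_of_nonneg_left ih hpos
      set E := Real.exp (-(M ((t : ℝ) + 1 + 1) - M ((t : ℝ) + 1))) with hE
      have hEpos : 0 < E := Real.exp_pos _
      -- bound each term
      have hsum : (1 - f ((t : ℝ) + 1)) *
          ((∑ i ∈ Finset.range (t + 1),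
            Real.exp (-(M (t + 1) - M (i + 1))) * ((2 * N + 1) * n i ^ 2))
          + y 0 * Real.exp (-(M (t + 1)))) ≤
          (∑ i ∈ Finset.range (t + 1),
            Real.exp (-(M ((t : ℝ) + 1 + 1) - M (i + 1))) * ((2 * N + 1) * n i ^ 2))
          + y 0 * Real.exp (-(M ((t : ℝ) + 1 + 1))) := by
        have hstep1 : (1 - f ((t : ℝ) + 1)) *
            ((∑ i ∈ Finset.range (t + 1),
              Real.exp (-(M (t + 1) - M (i + 1))) * ((2 * N + 1) * n i ^ 2))
            + y 0 * Real.exp (-(M (t + 1)))) ≤ E *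
            ((∑ i ∈ Finset.range (t + 1),
              Real.exp (-(M (t + 1) - M (i + 1))) * ((2 * N + 1) * n i ^ 2))
            + y 0 * Real.exp (-(M (t + 1)))) := by
          apply mul_le_mul_of_nonneg_right hk
          have hsum_nonneg : 0 ≤ ∑ i ∈ Finset.range (t + 1),
              Real.exp (-(M (t + 1) - M (i + 1))) * ((2 * N + 1) * n i ^ 2) := by
            apply Finset.sum_nonneg
            intro i _
            have := hn (i : ℝ)
            positivity
          have := hy 0
          positivity
        refine hstep1.trans (le_of_eq ?_)
        rw [mul_add, Finset.mul_sum]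
        congr 1
        · apply Finset.sum_congr rfl
          intro i _
          rw [← mul_assoc, hE, ← Real.exp_add]
          congr 2
          ring
        · rw [hE, mul_comm E, mul_assoc, ← Real.exp_add]
          congr 2
          ring
      have hlast : Real.exp (-(M ((t : ℝ) + 1 + 1) - M (((t : ℕ) : ℝ) + 1 + 1)))
          * ((2 * N + 1) * n ((t : ℝ) + 1) ^ 2) = (2 * N + 1) * n ((t : ℝ) + 1) ^ 2 := by
        simp
      have hfin : y (t + 1 + 1) ≤ (∑ i ∈ Finset.range (t + 1),
          Real.exp (-(M ((t : ℝ) + 1 + 1) - M (i + 1))) * ((2 * N + 1) * n i ^ 2))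
          + (2 * N + 1) * n ((t : ℝ) + 1) ^ 2
          + y 0 * Real.exp (-(M ((t : ℝ) + 1 + 1))) := by
        linarith [h1.trans hsum, hstep]
      rw [Finset.sum_range_succ]
      push_cast
      simp only [sub_self, neg_zero, Real.exp_zero, one_mul]
      linarith [hfin]
end
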